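/- arXiv:2109.15049 — 2 statements merged into one kernel-verified Lean document; each statement's English description precedes it below -/
import Mathlib

section
/- Let q ≥ 4 be an integer, and let x, y be integers. For an integer c define b = ((c - y) mod q) - ⌊q/2⌋, where (· mod q) takes values in [0, q). Suppose c = (x + ⌊q/2⌋·m + e) mod q for m ∈ {0,1}, y = x + e' for integers e, e' (noise), and |e - e'| < ⌊q/4⌋ - 1. Then |b| < ⌊q/4⌋ if and only if m = 1. -/
/-- GPV-style decryption correctness: with `q ≥ 4`, `c = (x + ⌊q/2⌋·m + e) mod q`,
`y = x + e'`, `m ∈ {0,1}` and `|e - e'| < ⌊q/4⌋ - 1`, setting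
`b = ((c - y) mod q) - ⌊q/2⌋` we have `|b| < ⌊q/4⌋ ↔ m = 1`. -/
theorem stmt_2 (q x y e e' m c b : ℤ) (hq : 4 ≤ q)
    (hm : m = 0 ∨ m = 1)
    (hc : c = (x + (q / 2) * m + e) % q)
    (hy : y = x + e')
    (he : |e - e'| < q / 4 - 1)
    (hb : b = ((c - y) % q) - q / 2) :
    |b| < q / 4 ↔ m = 1 := by
  obtain ⟨he1, he2⟩ := abs_lt.mp he
  have hq0 : 0 < q := by omega
  have h1 : (c - y) % q = (q / 2 * m + (e - e')) % q := by
    subst hc hy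
    conv_lhs => rw [Int.sub_emod, Int.emod_emod_of_dvd _ dvd_rfl, ← Int.sub_emod]
    ring_nf
  rw [abs_lt]
  rcases hm with rfl | rfl
  · simp only [mul_zero, zero_add] at h1
    rcases le_or_gt 0 (e - e') with h | h
    · have : (e - e') % q = e - e' := Int.emod_eq_of_lt h (by omega)
      rw [this] at h1
      omega
    · have : (e - e') % q = e - e' + q := by
        have h2 : (e - e' + q * 1) % q = e - e' + q * 1 :=
          Int.emod_eq_of_lt (a := e - e' + q * 1) (b := q) (by omega) (by omega)
        rw [Int.add_mul_emod_self_left] at h2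
        omega
      rw [this] at h1
      omega
  · simp only [mul_one] at h1
    have : (q / 2 + (e - e')) % q = q / 2 + (e - e') := by
      exact Int.emod_eq_of_lt (by omega) (by omega)
    rw [this] at h1
    omega
end

section
/- QDecrypt inverts QEncrypt on basis states: fix q ≥ 5, x ∈ ℤ_q, y ∈ ℤ_q, and assume |centered((x − y) mod q)| < ⌊q/4⌋, where centered denotes the centered representative mod q. Then for each m ∈ {0,1}, the composite classical-reversible map implementing Steps 1–10 of QDecrypt applied to the basis state value c = (x + ⌊q/2⌋·m) mod q (together with the classical input y) outputs m and restores all ancilla registers to 0. -/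
lemma emod_sub_emod' (a b q : ℤ) : (a % q - b) % q = (a - b) % q := by
  conv_lhs => rw [Int.sub_emod, Int.emod_emod_of_dvd _ dvd_rfl, ← Int.sub_emod]

lemma emod_add_emod' (a b q : ℤ) : (a % q + b) % q = (a + b) % q := by
  conv_lhs => rw [Int.add_emod, Int.emod_emod_of_dvd _ dvd_rfl, ← Int.add_emod]

lemma emod_sub_self' (a q : ℤ) : (a - q) % q = a % q := by
  rw [show a - q = a + q * (-1) by ring, Int.add_mul_emod_self_left]

/-- QDecrypt inverts QEncrypt on basis states: for `q ≥ 5`, `x, y ∈ [0, q)` with the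
centered representative of `(x - y) mod q` of absolute value `< ⌊q/4⌋`, and `m ∈ {0,1}`,
the composite classical-reversible map of Steps 1–10 of QDecrypt applied to the basis
value `c = (x + ⌊q/2⌋·m) mod q` (with `b = ((c - y) mod q) - ⌊q/2⌋` and decoding rule
`m = 1` iff `|b| < ⌊q/4⌋`) outputs `m`, recovers `c` (hence restores the ancillas to
`0`), and uncomputing the copy of `⌊q/2⌋·m` recovers `x`. -/
theorem stmt_19 (q x y m : ℤ) (hq : 5 ≤ q)
    (hx1 : 0 ≤ x) (hx2 : x < q) (hy1 : 0 ≤ y) (hy2 : y < q)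
    (hm : m = 0 ∨ m = 1)
    (hnoise : |(((x - y) % q + q / 2) % q) - q / 2| < q / 4) :
    (if |(((x + q / 2 * m) % q - y) % q) - q / 2| < q / 4 then (1 : ℤ) else 0) = m ∧
    ((((x + q / 2 * m) % q - y) % q - q / 2 + q / 2) + y) % q = (x + q / 2 * m) % q ∧
    ((x + q / 2 * m) % q - q / 2 * m) % q = x := by
  have hq0 : (0:ℤ) < q := by omega
  have hxq : x % q = x := Int.emod_eq_of_lt hx1 hx2
  set r := (x - y) % q with hrdef
  have hr1 : 0 ≤ r := Int.emod_nonneg _ (by omega)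
  have hr2 : r < q := Int.emod_lt_of_pos _ hq0
  have hres : (r + q / 2) % q = if r + q / 2 < q then r + q / 2 else r + q / 2 - q := by
    split_ifs with h
    · exact Int.emod_eq_of_lt (by omega) h
    · rw [← emod_sub_self' (r + q / 2) q]
      exact Int.emod_eq_of_lt (by omega) (by omega)
  -- key fact: r ∈ [0, q/4) ∪ (q - q/4, q)
  have hrrange : r < q / 4 ∨ q - q / 4 < r := by
    rw [hres] at hnoise
    split_ifs at hnoise with h
    · rw [abs_lt] at hnoise; omega
    · rw [abs_lt] at hnoise; omega
  rcases hm with hm | hm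
  · subst hm
    simp only [mul_zero, add_zero, sub_zero]
    rw [hxq, ← hrdef]
    refine ⟨?_, ?_, hxq⟩
    · rw [if_neg]
      rw [abs_lt]
      push_neg
      intro hlt
      omega
    · rw [sub_add_cancel, emod_add_emod', show x - y + y = x by ring, hxq]
  · subst hm
    simp only [mul_one]
    have hkey : ((x + q / 2) % q - y) % q = (r + q / 2) % q := by
      rw [emod_sub_emod', hrdef, emod_add_emod']
      ring_nf
    refine ⟨?_, ?_, ?_⟩
    · rw [hkey, if_pos hnoise]
    · rw [hkey, sub_add_cancel, emod_add_emod', hrdef, add_assoc, emod_add_emod',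
        show x - y + (q / 2 + y) = x + q / 2 by ring]
    · rw [emod_sub_emod', add_sub_cancel_right, hxq]
end
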